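/- Let D be an integral domain with fraction field K such that the intersection of all maximal ideals of D of finite index is (0), and let ℐ_n ⊆ M_n(D) be the set of companion matrices of monic irreducible polynomials of degree n in D[x]. Then f ∈ K[x] maps every matrix in M_n(D) into M_n(D) if and only if f maps every matrix in ℐ_n into M_n(D). -/

import Mathlib

open Polynomial

/-- The companion matrix of a monic polynomial of degree `n`. -/
def companionMatrix {D : Type*} [CommRing D] (n : ℕ) (p : D[X]) :
    Matrix (Fin n) (Fin n) D :=
  Matrix.of fun i j =>
    if (j : ℕ) + 1 = (i : ℕ) then 1
    else if (j : ℕ) = n - 1 then -p.coeff (i : ℕ) else 0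

/-!
Write `f = g / d` with `g ∈ D[X]` and `d ≠ 0`; then `f(M)` is integral iff every entry of `g(M)`
lies in `(d)`. The basis vector `e₀` is cyclic for the companion matrix `C_χ`, with
`C_χᵏ e₀ = eₖ` for `k < n`, so the first column of `g(C_χ)` is the coefficient vector of `g mod χ`.
Hence `g(C_χ) ≡ 0 mod d` forces `g mod χ ≡ 0 mod d`, and by Cayley–Hamilton `g(A) ≡ 0 mod d` for
every `A` with characteristic polynomial `χ`. Finally, some maximal ideal `P` of finite index
misses `d`; lifting an irreducible polynomial of degree `n` over the finite field `D/P` and using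
the Chinese remainder theorem gives a monic `q ≡ χ mod d` that is irreducible modulo `P`, hence
irreducible, and `g(C_χ) ≡ g(C_q) ≡ 0 mod d`.
-/

open scoped Matrix

section

variable {R : Type*} [CommRing R] {n : ℕ}

theorem companionMatrix_mulVec_single (p : R[X]) (j : Fin n) (hj : (j : ℕ) + 1 < n) :
    companionMatrix n p *ᵥ Pi.single j 1 = Pi.single ⟨j + 1, hj⟩ 1 := by
  ext i
  simp only [Matrix.mulVec_single_one, Matrix.col_apply, companionMatrix, Matrix.of_apply,
    Pi.single_apply, Fin.ext_iff]
  split_ifs <;> first | rfl | omega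

theorem companionMatrix_mulVec_single_last (p : R[X]) (j : Fin n) (hj : (j : ℕ) + 1 = n) :
    companionMatrix n p *ᵥ Pi.single j 1 = fun i : Fin n ↦ -p.coeff i := by
  ext i
  simp only [Matrix.mulVec_single_one, Matrix.col_apply, companionMatrix, Matrix.of_apply]
  rw [if_neg (by omega), if_pos (by omega)]

theorem companionMatrix_pow_mulVec_single_zero [NeZero n] (p : R[X]) {k : ℕ} (hk : k < n) :
    companionMatrix n p ^ k *ᵥ Pi.single 0 1 = Pi.single ⟨k, hk⟩ 1 := by
  induction k with
  | zero => rw [pow_zero, Matrix.one_mulVec]; rfl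
  | succ k ih =>
    rw [pow_succ', ← Matrix.mulVec_mulVec, ih (by omega),
      companionMatrix_mulVec_single p ⟨k, by omega⟩ hk]

theorem aeval_companionMatrix_mulVec_single_zero [NeZero n] (p h : R[X]) (hh : h.natDegree < n) :
    aeval (companionMatrix n p) h *ᵥ Pi.single 0 1 = fun i : Fin n ↦ h.coeff i := by
  rw [aeval_eq_sum_range' hh, Finset.sum_range, Matrix.sum_mulVec]
  simp_rw [Matrix.smul_mulVec, fun k : Fin n ↦ companionMatrix_pow_mulVec_single_zero p k.isLt]
  ext i
  simp [Finset.sum_apply, Pi.single_apply]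

theorem aeval_companionMatrix_self_mulVec_single_zero [NeZero n] {p : R[X]} (hp : p.Monic)
    (hdeg : p.natDegree = n) : aeval (companionMatrix n p) p *ᵥ Pi.single 0 1 = 0 := by
  have hsplit : p = p.eraseLead + X ^ n := by
    conv_lhs => rw [← p.eraseLead_add_monomial_natDegree_leadingCoeff]
    rw [hp.leadingCoeff, hdeg, monomial_one_right_eq_X_pow]
  have hlead : p.eraseLead.natDegree < n := by
    rcases p.eraseLead_natDegree_lt_or_eraseLead_eq_zero with h | h
    · omega
    · rw [h, natDegree_zero]; exact Nat.pos_of_neZero n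
  have hlast : companionMatrix n p ^ n = companionMatrix n p * companionMatrix n p ^ (n - 1) := by
    rw [← pow_succ', Nat.sub_add_cancel NeZero.one_le]
  rw [congrArg (aeval _) hsplit, map_add, map_pow, aeval_X, hlast, Matrix.add_mulVec,
    ← Matrix.mulVec_mulVec,
    companionMatrix_pow_mulVec_single_zero p (Nat.sub_one_lt (NeZero.ne n)),
    companionMatrix_mulVec_single_last p _ (Nat.sub_add_cancel NeZero.one_le),
    aeval_companionMatrix_mulVec_single_zero p _ hlead]
  ext i
  simp [eraseLead_coeff_of_ne (f := p) (i : ℕ) (by omega)]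

theorem aeval_companionMatrix_mulVec_single_zero_eq_coeff_modByMonic [NeZero n] {p : R[X]}
    (hp : p.Monic) (hdeg : p.natDegree = n) (g : R[X]) :
    aeval (companionMatrix n p) g *ᵥ Pi.single 0 1 = fun i : Fin n ↦ (g %ₘ p).coeff i := by
  have hp1 : p ≠ 1 := hp.natDegree_pos.mp (hdeg ▸ Nat.pos_of_neZero n)
  conv_lhs => rw [← modByMonic_add_div g p, map_add, Matrix.add_mulVec, mul_comm, map_mul,
    ← Matrix.mulVec_mulVec, aeval_companionMatrix_self_mulVec_single_zero hp hdeg,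
    Matrix.mulVec_zero, add_zero]
  exact aeval_companionMatrix_mulVec_single_zero p _ (hdeg ▸ natDegree_modByMonic_lt g hp hp1)

theorem aeval_mem_matrix_of_aeval_companionMatrix_charpoly_mem [Nontrivial R] [NeZero n]
    {I : Ideal R} (A : Matrix (Fin n) (Fin n) R) {g : R[X]}
    (hg : aeval (companionMatrix n A.charpoly) g ∈ I.matrix (Fin n)) :
    aeval A g ∈ I.matrix (Fin n) := by
  have hdeg : A.charpoly.natDegree = n := by simp
  have hcoeff (k : ℕ) : (g %ₘ A.charpoly).coeff k ∈ I := by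
    by_cases hk : k < n
    · have := congr_fun
        (aeval_companionMatrix_mulVec_single_zero_eq_coeff_modByMonic A.charpoly_monic hdeg g)
        ⟨k, hk⟩
      rw [Matrix.mulVec_single_one, Matrix.col_apply] at this
      exact this ▸ hg _ _
    · have hχ1 : A.charpoly ≠ 1 :=
        A.charpoly_monic.natDegree_pos.mp (hdeg.symm ▸ Nat.pos_of_neZero n)
      have := natDegree_modByMonic_lt g A.charpoly_monic hχ1
      rw [coeff_eq_zero_of_natDegree_lt (by omega)]
      exact I.zero_mem
  rw [← aeval_modByMonic_eq_self_of_root (Matrix.aeval_self_charpoly A), aeval_eq_sum_range,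
    Ideal.mem_matrix]
  intro i j
  simp only [Matrix.sum_apply, Matrix.smul_apply, smul_eq_mul]
  exact Ideal.sum_mem _ fun k _ ↦ I.mul_mem_right _ (hcoeff k)

theorem Matrix.map_aeval {m S : Type*} [Fintype m] [DecidableEq m] [CommRing S] (σ : R →+* S)
    (M : Matrix m m R) (g : R[X]) : (aeval M g).map σ = aeval (M.map σ) (g.map σ) :=
  map_aeval_eq_aeval_map (ψ := σ.mapMatrix)
    (by ext; simp [Matrix.algebraMap_matrix_apply, apply_ite σ]) g M

theorem companionMatrix_map {S : Type*} [CommRing S] (σ : R →+* S) (p : R[X]) :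
    (companionMatrix n p).map σ = companionMatrix n (p.map σ) := by
  ext i j
  simp only [companionMatrix, Matrix.map_apply, Matrix.of_apply, apply_ite σ, map_one, map_zero,
    map_neg, coeff_map]

theorem aeval_companionMatrix_sub_mem_matrix {I : Ideal R} {p q : R[X]}
    (hpq : p.map (Ideal.Quotient.mk I) = q.map (Ideal.Quotient.mk I)) (g : R[X]) :
    aeval (companionMatrix n p) g - aeval (companionMatrix n q) g ∈ I.matrix (Fin n) := by
  have key : (aeval (companionMatrix n p) g).map (Ideal.Quotient.mk I) =
      (aeval (companionMatrix n q) g).map (Ideal.Quotient.mk I) := by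
    rw [Matrix.map_aeval, Matrix.map_aeval, companionMatrix_map, companionMatrix_map, hpq]
  rw [Ideal.mem_matrix]
  intro i j
  exact Ideal.Quotient.eq.mp (congr_fun (congr_fun key i) j)

theorem FiniteField.exists_monic_irreducible_natDegree_eq (k : Type*) [Field k] [Finite k]
    {n : ℕ} (hn : n ≠ 0) : ∃ r : k[X], r.Monic ∧ r.natDegree = n ∧ Irreducible r := by
  have : Fact (ringChar k).Prime := ⟨CharP.char_is_prime k _⟩
  have : NeZero n := ⟨hn⟩
  obtain ⟨α, hα⟩ := Field.exists_primitive_element k (Extension k (ringChar k) n)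
  have hα_int : IsIntegral k α := .of_finite k α
  refine ⟨minpoly k α, minpoly.monic hα_int, ?_, minpoly.irreducible hα_int⟩
  rw [(Field.primitive_element_iff_minpoly_natDegree_eq k α).mp hα, finrank_extension]

theorem exists_monic_irreducible_map_eq [IsDomain R] {I P : Ideal R} (hIP : IsCoprime I P)
    [P.IsMaximal] [Finite (R ⧸ P)] {p : R[X]} (hp : p.Monic) (hp0 : p.natDegree ≠ 0) :
    ∃ q : R[X], q.Monic ∧ q.natDegree = p.natDegree ∧ Irreducible q ∧
      q.map (Ideal.Quotient.mk I) = p.map (Ideal.Quotient.mk I) := by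
  let := Ideal.Quotient.field P
  obtain ⟨r, hr, hrdeg, hrirr⟩ := FiniteField.exists_monic_irreducible_natDegree_eq (R ⧸ P) hp0
  obtain ⟨r', hr'map, hr'deg, hr'⟩ := lifts_and_natDegree_eq_and_monic
    ((mem_lifts r).mpr (map_surjective _ Ideal.Quotient.mk_surjective r)) hr
  obtain ⟨u, hu, v, hv, huv⟩ := Ideal.isCoprime_iff_exists.mp hIP
  -- `u ≡ 0 mod I` and `u ≡ 1 mod P`, so `p + u (r' - p)` is `≡ p mod I` and `≡ r' mod P`.
  have hsmall : (C u * (r' - p)).degree < p.degree := by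
    rw [← smul_eq_C_mul]
    refine (degree_smul_le _ _).trans_lt (degree_sub_lt_right ?_ hp.ne_zero (by rw [hr', hp]))
    rw [degree_eq_natDegree hr'.ne_zero, degree_eq_natDegree hp.ne_zero, hr'deg, hrdeg]
  refine ⟨p + C u * (r' - p), hp.add_of_left hsmall, natDegree_add_eq_left_of_degree_lt hsmall,
    ?_, ?_⟩
  · have hP : (p + C u * (r' - p)).map (Ideal.Quotient.mk P) = r := by
      rw [← hr'map, show p + C u * (r' - p) = r' + C v * (p - r') by
        rw [eq_sub_of_add_eq' huv, C_sub, C_1]; ring]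
      simp [Ideal.Quotient.eq_zero_iff_mem.mpr hv]
    exact (hp.add_of_left hsmall).irreducible_of_irreducible_map _ _ (hP ▸ hrirr)
  · simp [Ideal.Quotient.eq_zero_iff_mem.mpr hu]

theorem aeval_mem_matrix_of_forall_irreducible [IsDomain R] [NeZero n] {I P : Ideal R}
    (hIP : IsCoprime I P) [P.IsMaximal] [Finite (R ⧸ P)] {g : R[X]}
    (hg : ∀ q : R[X], q.Monic → q.natDegree = n → Irreducible q →
      aeval (companionMatrix n q) g ∈ I.matrix (Fin n))
    (A : Matrix (Fin n) (Fin n) R) : aeval A g ∈ I.matrix (Fin n) := by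
  have hdeg : A.charpoly.natDegree = n := by simp
  obtain ⟨q, hq, hqdeg, hqirr, hqmap⟩ :=
    exists_monic_irreducible_map_eq hIP A.charpoly_monic (by rw [hdeg]; exact NeZero.ne n)
  apply aeval_mem_matrix_of_aeval_companionMatrix_charpoly_mem
  simpa using add_mem (aeval_companionMatrix_sub_mem_matrix hqmap.symm g)
    (hg q hq (hqdeg.trans hdeg) hqirr)

theorem exists_map_eq_iff_aeval_mem_matrix {m K : Type*} [Fintype m] [DecidableEq m] [Field K]
    [Algebra R K] (hinj : Function.Injective (algebraMap R K)) {f : K[X]} {g : R[X]} {d : R}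
    (hd : d ≠ 0) (hgf : g.map (algebraMap R K) = d • f) (M : Matrix m m R) :
    (∃ B : Matrix m m R, aeval (M.map (algebraMap R K)) f = B.map (algebraMap R K)) ↔
      aeval M g ∈ (Ideal.span {d}).matrix m := by
  have key : (aeval M g).map (algebraMap R K) =
      algebraMap R K d • aeval (M.map (algebraMap R K)) f := by
    rw [Matrix.map_aeval, hgf, ← algebraMap_smul K d f, smul_eq_C_mul, map_mul, aeval_C,
      ← Algebra.smul_def]
  have hmap_smul (B : Matrix m m R) :
      (d • B).map (algebraMap R K) = algebraMap R K d • B.map (algebraMap R K) := by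
    ext; simp
  constructor
  · rintro ⟨B, hB⟩ i j
    rw [hB, ← hmap_smul] at key
    rw [Matrix.map_injective hinj key]
    exact Ideal.mul_mem_right _ _ (Ideal.mem_span_singleton_self d)
  · intro hM
    choose b hb using fun i j ↦ Ideal.mem_span_singleton'.mp (hM i j)
    have hMB : aeval M g = d • Matrix.of b := by
      ext i j
      simp [← hb, mul_comm]
    refine ⟨Matrix.of b, smul_right_injective _ ((map_ne_zero_iff _ hinj).mpr hd) ?_⟩
    simp only [← key, hMB, hmap_smul]

end

/-- If the intersection of the maximal ideals of finite index of `D` is `(0)`, then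
`Int_D(Mₙ(D)) = Int_D(ℐₙ, Mₙ(D))`, where `ℐₙ` is the set of companion matrices of
monic irreducible polynomials of degree `n`. -/
theorem stmt_4 {D K : Type*} [CommRing D] [IsDomain D] [Field K] [Algebra D K]
    [IsFractionRing D K]
    (hrad : (⨅ P ∈ {P : Ideal D | P.IsMaximal ∧ Finite (D ⧸ P)}, P) = ⊥)
    (n : ℕ) (hn : 0 < n) (f : K[X]) :
    (∀ C : Matrix (Fin n) (Fin n) D, ∃ B : Matrix (Fin n) (Fin n) D,
        Polynomial.aeval (C.map (algebraMap D K)) f = B.map (algebraMap D K)) ↔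
      (∀ p : D[X], p.Monic → p.natDegree = n → Irreducible p →
        ∃ B : Matrix (Fin n) (Fin n) D,
          Polynomial.aeval ((companionMatrix n p).map (algebraMap D K)) f
            = B.map (algebraMap D K)) := by
  refine ⟨fun h p _ _ _ ↦ h _, fun h A ↦ ?_⟩
  obtain ⟨d, hd, hgf⟩ := IsLocalization.integerNormalization_spec (nonZeroDivisors D) f
  have hd0 : d ≠ 0 := nonZeroDivisors.ne_zero hd
  obtain ⟨P, ⟨hP, _⟩, hdP⟩ : ∃ P ∈ {P : Ideal D | P.IsMaximal ∧ Finite (D ⧸ P)}, d ∉ P := by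
    by_contra! hall
    exact hd0 (by rw [← Ideal.mem_bot, ← hrad]; simpa [Ideal.mem_iInf] using hall)
  have : NeZero n := ⟨hn.ne'⟩
  simp only [exists_map_eq_iff_aeval_mem_matrix (IsFractionRing.injective D K) hd0 hgf] at h ⊢
  obtain ⟨y, i, hi, hyi⟩ := hP.exists_inv hdP
  have hcop : IsCoprime (Ideal.span {d}) P := Ideal.isCoprime_iff_exists.mpr
    ⟨y * d, Ideal.mul_mem_left _ _ (Ideal.mem_span_singleton_self d), i, hi, hyi⟩
  exact aeval_mem_matrix_of_forall_irreducible hcop h A
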